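/- Let G be a countable residually finite group and let A be a finite set. If X ⊆ A^G is a nonempty strongly irreducible subshift of finite type containing a periodic configuration, then there exists a shift-invariant Borel probability measure on X whose support is all of X. -/

import Mathlib

/-- The shift action of a group `G` on configurations `x : G → A`:
`(g • x)(h) = x(g⁻¹h)`. -/
def shift {G A : Type*} [Group G] (g : G) (x : G → A) : G → A :=
  fun h => x (g⁻¹ * h)

/-- A subshift is a closed, shift-invariant subset of `A^G` (with the prodiscrete topology). -/
def IsSubshift {G A : Type*} [Group G] [TopologicalSpace A] (X : Set (G → A)) : Prop :=
  IsClosed X ∧ ∀ (g : G) (x : G → A), x ∈ X → shift g x ∈ X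

/-- A configuration is periodic if its orbit under the shift action is finite. -/
def IsPeriodicConfig {G A : Type*} [Group G] (x : G → A) : Prop :=
  (Set.range fun g : G => shift g x).Finite

/-- A subshift is of finite type if it is defined by a finite window `Ω` and a set of
allowed patterns `P ⊆ A^Ω`. -/
def IsOfFiniteType {G A : Type*} [Group G] (X : Set (G → A)) : Prop :=
  ∃ (Ω : Finset G) (P : Set ({g : G // g ∈ Ω} → A)),
    X = {x : G → A | ∀ g : G, (fun w : {g : G // g ∈ Ω} => shift g x w.1) ∈ P}

/-- A subshift is strongly irreducible if there is a finite `Δ ⊆ G` such that any two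
patterns of configurations of `X` with supports `Ω₁, Ω₂` satisfying `Ω₁Δ⁻¹ ∩ Ω₂ = ∅`
can be glued inside `X`. -/
def IsStronglyIrreducible {G A : Type*} [Group G] (X : Set (G → A)) : Prop :=
  ∃ Δ : Finset G, ∀ Ω₁ Ω₂ : Finset G,
    (∀ a ∈ Ω₁, ∀ d ∈ Δ, a * d⁻¹ ∉ Ω₂) →
    ∀ x₁ ∈ X, ∀ x₂ ∈ X, ∃ x ∈ X,
      (∀ w ∈ Ω₁, x w = x₁ w) ∧ (∀ w ∈ Ω₂, x w = x₂ w)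

/-- A group is residually finite if the intersection of its finite-index subgroups is
trivial, i.e. every nontrivial element avoids some finite-index subgroup. -/
def ResiduallyFinite (H : Type*) [Group H] : Prop :=
  ∀ h : H, h ≠ 1 → ∃ K : Subgroup H, K.FiniteIndex ∧ h ∉ K


/-!
Periodic configurations are dense in `X`. Given `x ∈ X` and a finite window `Ω`, strong
irreducibility glues `x|_Ω` to the periodic configuration `p` on a finite region around a
neighbourhood `B` of `Ω`. Residual finiteness gives a finite-index subgroup `K ≤ Stab(p)` whose
nontrivial elements move `B` off itself and off every SFT window that meets `B`; copying the
glued configuration onto each translate `kB` (`k ∈ K`) and `p` everywhere else yields a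
`K`-invariant, hence periodic, configuration. It lies in `X` because every window sees either
`p` or a single translate of the glued configuration.

The uniform measures on the finite orbits of a dense sequence of periodic configurations are
invariant, and their mixture with weights `2^-(n+1)` charges every nonempty open subset of `X`.
-/

open MeasureTheory ProbabilityTheory MulAction Pointwise
open scoped ENNReal

section Mixture

variable {Ω : Type*} [MeasurableSpace Ω]

lemma map_uniformOn_of_preimage_eq {f : Ω → Ω} (hf : Measurable f) (hbij : f.Bijective)
    {s : Set Ω} (hs : MeasurableSet s) (hfs : f ⁻¹' s = s) :
    (uniformOn s).map f = uniformOn s := by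
  ext t ht
  have hst : s ∩ f ⁻¹' t = f ⁻¹' (s ∩ t) := by rw [Set.preimage_inter, hfs]
  rw [Measure.map_apply hf ht, uniformOn, cond_apply hs, cond_apply hs, hst,
    Measure.count_apply (hf (hs.inter ht)), Measure.count_apply (hs.inter ht),
    Set.encard_preimage_of_injective_subset_range hbij.1 (by simp [hbij.2.range_eq])]

noncomputable def geometricMixture (ν : ℕ → Measure Ω) : Measure Ω :=
  Measure.sum fun n => (2⁻¹ : ℝ≥0∞) ^ (n + 1) • ν n

variable {ν : ℕ → Measure Ω}

lemma geometricMixture_apply_eq_one {s : Set Ω} (hs : MeasurableSet s) (hν : ∀ n, ν n s = 1) :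
    geometricMixture ν s = 1 := by
  simp only [geometricMixture, Measure.sum_apply _ hs, Measure.smul_apply, smul_eq_mul, hν,
    mul_one, ENNReal.tsum_geometric_add_one, ENNReal.one_sub_inv_two, inv_inv]
  exact ENNReal.inv_mul_cancel two_ne_zero ENNReal.ofNat_ne_top

lemma geometricMixture_pos {s : Set Ω} (n : ℕ) (hn : 0 < ν n s) : 0 < geometricMixture ν s :=
  calc 0 < ((2⁻¹ : ℝ≥0∞) ^ (n + 1) • ν n) s := by simpa using ⟨ENNReal.pow_pos (by simp) _, hn⟩
    _ ≤ geometricMixture ν s := Measure.le_sum _ n s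

lemma map_geometricMixture {f : Ω → Ω} (hf : Measurable f) :
    (geometricMixture ν).map f = geometricMixture fun n => (ν n).map f := by
  simp only [geometricMixture, Measure.map_sum hf.aemeasurable, Measure.map_smul]

end Mixture

section Shift

-- With this action `g • x` unfolds to `shift g x`, so Mathlib's orbits and stabilizers apply.
attribute [local instance] arrowAction

variable {G A : Type*} [Group G]

lemma continuous_shift [TopologicalSpace A] (g : G) : Continuous (shift g : (G → A) → G → A) :=
  continuous_pi fun h => continuous_apply (g⁻¹ * h)

lemma isPeriodicConfig_iff_finiteIndex_stabilizer {x : G → A} :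
    IsPeriodicConfig x ↔ (stabilizer G x).FiniteIndex := by
  rw [Subgroup.finiteIndex_iff_finite_quotient,
    ← (orbitEquivQuotientStabilizer G x).finite_iff, Set.finite_coe_iff]
  rfl

lemma ResiduallyFinite.exists_finiteIndex_forall_mem_eq_one (hG : ResiduallyFinite G)
    (S : Finset G) : ∃ K : Subgroup G, K.FiniteIndex ∧ ∀ s ∈ S, s ∈ K → s = 1 := by
  have hG' : ∀ s : G, ∃ K : Subgroup G, K.FiniteIndex ∧ (s ∈ K → s = 1) := fun s => by
    by_cases hs : s = 1
    · exact ⟨⊤, inferInstance, fun _ => hs⟩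
    · obtain ⟨K, hKfi, hsK⟩ := hG s hs
      exact ⟨K, hKfi, fun h => absurd h hsK⟩
  choose K hKfi hK using hG'
  exact ⟨⨅ s ∈ S, K s, Subgroup.finiteIndex_iInf' _ fun s _ => hKfi s,
    fun s hs hsK => hK s (Subgroup.mem_iInf.1 (Subgroup.mem_iInf.1 hsK s) hs)⟩

lemma ResiduallyFinite.exists_finiteIndex_le_stabilizer (hG : ResiduallyFinite G)
    {p : G → A} (hp : IsPeriodicConfig p) (S : Finset G) :
    ∃ K : Subgroup G, K.FiniteIndex ∧ K ≤ stabilizer G p ∧ ∀ k ∈ K, k ∈ S → k = 1 := by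
  obtain ⟨K, hK, hKS⟩ := hG.exists_finiteIndex_forall_mem_eq_one S
  have := isPeriodicConfig_iff_finiteIndex_stabilizer.1 hp
  exact ⟨K ⊓ stabilizer G p, inferInstance, inf_le_right, fun k hk hkS => hKS k hkS hk.1⟩

section Periodize

variable (K : Subgroup G) (B : Set G) (z p : G → A)

/-- `z` copied from `B` onto every translate `kB`, `k ∈ K`, and `p` elsewhere. -/
noncomputable def periodize : G → A := fun h =>
  open Classical in
  if hc : ∃ k ∈ K, k⁻¹ * h ∈ B then z (hc.choose⁻¹ * h) else p h

variable {K B z p}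

lemma periodize_apply_of_mem (hB : ∀ k ∈ K, ∀ b ∈ B, k * b ∈ B → k = 1)
    {k h : G} (hk : k ∈ K) (hh : k⁻¹ * h ∈ B) : periodize K B z p h = z (k⁻¹ * h) := by
  have hc : ∃ k ∈ K, k⁻¹ * h ∈ B := ⟨k, hk, hh⟩
  obtain ⟨hck, hch⟩ := hc.choose_spec
  have : k⁻¹ * hc.choose = 1 :=
    hB _ (mul_mem (inv_mem hk) hck) _ hch (by rwa [mul_assoc, mul_inv_cancel_left])
  rw [periodize, dif_pos hc, ← inv_mul_eq_one.1 this]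

lemma periodize_apply_of_forall_notMem {h : G} (hh : ∀ k ∈ K, k⁻¹ * h ∉ B) :
    periodize K B z p h = p h := by
  rw [periodize, dif_neg fun ⟨k, hk, hkh⟩ => hh k hk hkh]

lemma le_stabilizer_periodize (hB : ∀ k ∈ K, ∀ b ∈ B, k * b ∈ B → k = 1)
    (hp : K ≤ stabilizer G p) : K ≤ stabilizer G (periodize K B z p) := by
  intro k₀ hk₀
  rw [mem_stabilizer_iff]
  funext h
  change periodize K B z p (k₀⁻¹ * h) = periodize K B z p h
  by_cases hc : ∃ k ∈ K, k⁻¹ * h ∈ B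
  · obtain ⟨k, hk, hkh⟩ := hc
    have hkh' : (k₀⁻¹ * k)⁻¹ * (k₀⁻¹ * h) = k⁻¹ * h := by group
    rw [periodize_apply_of_mem hB hk hkh,
      periodize_apply_of_mem hB (mul_mem (inv_mem hk₀) hk) (hkh' ▸ hkh), hkh']
  · push Not at hc
    have hc' : ∀ k ∈ K, k⁻¹ * (k₀⁻¹ * h) ∉ B := fun k hk => by
      simpa [mul_assoc] using hc (k₀ * k) (mul_mem hk₀ hk)
    rw [periodize_apply_of_forall_notMem hc, periodize_apply_of_forall_notMem hc']
    exact congrFun (hp hk₀) h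

lemma eqOn_periodize_smul (hB : ∀ k ∈ K, ∀ b ∈ B, k * b ∈ B → k = 1)
    (hp : K ≤ stabilizer G p) {k : G} (hk : k ∈ K) {W : Set G}
    (hW : ∀ k' ∈ K, ∀ w ∈ W, k'⁻¹ * w ∈ B → k' = k)
    (hz : ∀ w ∈ W, k⁻¹ * w ∉ B → z (k⁻¹ * w) = p (k⁻¹ * w)) :
    Set.EqOn (periodize K B z p) (k • z) W := by
  intro w hw
  by_cases hc : ∃ k' ∈ K, k'⁻¹ * w ∈ B
  · obtain ⟨k', hk', hkw⟩ := hc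
    obtain rfl := hW k' hk' w hw hkw
    exact periodize_apply_of_mem hB hk' hkw
  · push Not at hc
    rw [periodize_apply_of_forall_notMem hc]
    change p w = z (k⁻¹ * w)
    rw [hz w hw (hc k hk)]
    exact (congrFun (hp hk) w).symm

end Periodize

lemma mem_of_forall_exists_eqOn_smul {Ω₀ : Finset G} {P : Set ({g : G // g ∈ Ω₀} → A)}
    {X : Set (G → A)}
    (hX : X = {x : G → A | ∀ g : G, (fun w : {g : G // g ∈ Ω₀} => shift g x w.1) ∈ P})
    {y : G → A} (hy : ∀ g : G, ∃ x ∈ X, ∃ k : G, Set.EqOn y (k • x) {w | g * w ∈ Ω₀}) :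
    y ∈ X := by
  rw [hX]
  intro g
  obtain ⟨x, hx, k, hxy⟩ := hy g
  rw [hX] at hx
  convert hx (g * k) using 1
  funext u
  rw [shift, hxy (by simp)]
  exact congrArg x (by rw [smul_eq_mul, mul_inv_rev, mul_assoc])

theorem exists_isPeriodicConfig_eqOn (hG : ResiduallyFinite G) {X : Set (G → A)}
    (hft : IsOfFiniteType X) (hsi : IsStronglyIrreducible X) {p : G → A} (hpX : p ∈ X)
    (hp : IsPeriodicConfig p) {x : G → A} (hx : x ∈ X) (Ω : Finset G) :
    ∃ y ∈ X, IsPeriodicConfig y ∧ ∀ ω ∈ Ω, y ω = x ω := by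
  classical
  obtain ⟨Δ, hΔ⟩ := hsi
  obtain ⟨Ω₀, P, hX⟩ := hft
  set B := Ω * (insert 1 Δ)⁻¹
  -- every left translate of the window `Ω₀` that meets `B` lies in `C`
  set C := B * insert 1 (Ω₀⁻¹ * Ω₀)
  have hBC : B ⊆ C := Finset.subset_mul_left B (Finset.mem_insert_self 1 _)
  obtain ⟨z, hzX, hzx, hzp⟩ := hΔ Ω (C \ B) (fun a ha d hd hC => (Finset.mem_sdiff.1 hC).2 <|
    Finset.mul_mem_mul ha (Finset.inv_mem_inv (Finset.mem_insert_of_mem hd))) x hx p hpX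
  obtain ⟨K, hK, hKp, hKC⟩ := hG.exists_finiteIndex_le_stabilizer hp (C * B⁻¹)
  have hB : ∀ k ∈ K, ∀ b ∈ B, k * b ∈ B → k = 1 := fun k hk b hb hkb =>
    hKC k hk (by simpa using Finset.mul_mem_mul (hBC hkb) (Finset.inv_mem_inv hb))
  refine ⟨periodize K B z p, mem_of_forall_exists_eqOn_smul hX fun g => ?_,
    isPeriodicConfig_iff_finiteIndex_stabilizer.2 <|
      Subgroup.finiteIndex_of_le (le_stabilizer_periodize hB hKp),
    fun ω hω => ?_⟩
  · by_cases hc : ∃ w₀, g * w₀ ∈ Ω₀ ∧ ∃ k ∈ K, k⁻¹ * w₀ ∈ B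
    · obtain ⟨w₀, hw₀, k, hk, hkw₀⟩ := hc
      have hwin : ∀ w, g * w ∈ Ω₀ → k⁻¹ * w ∈ C := fun w hw => by
        have : k⁻¹ * w = (k⁻¹ * w₀) * ((g * w₀)⁻¹ * (g * w)) := by group
        rw [this]
        exact Finset.mul_mem_mul hkw₀ (Finset.mem_insert_of_mem
          (Finset.mul_mem_mul (Finset.inv_mem_inv hw₀) hw))
      refine ⟨z, hzX, k, eqOn_periodize_smul hB hKp hk (fun k' hk' w hw hkw => ?_)
        (fun w hw hkw => hzp _ (Finset.mem_sdiff.2 ⟨hwin w hw, hkw⟩))⟩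
      have : k'⁻¹ * k = (k'⁻¹ * w) * ((g * w)⁻¹ * (g * w₀)) * (k⁻¹ * w₀)⁻¹ := by group
      have hmem : k'⁻¹ * k ∈ C * B⁻¹ := this ▸ Finset.mul_mem_mul (Finset.mul_mem_mul hkw
        (Finset.mem_insert_of_mem (Finset.mul_mem_mul (Finset.inv_mem_inv hw) hw₀)))
        (Finset.inv_mem_inv hkw₀)
      exact inv_mul_eq_one.1 (hKC _ (mul_mem (inv_mem hk') hk) hmem)
    · push Not at hc
      refine ⟨p, hpX, 1, fun w hw => ?_⟩
      rw [one_smul, periodize_apply_of_forall_notMem (hc w hw)]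
  · have hωB : ω ∈ B := Finset.subset_mul_left Ω (by simp) hω
    rw [periodize_apply_of_mem hB (one_mem K) (by rwa [inv_one, one_mul]), inv_one, one_mul,
      hzx ω hω]

section Topology

variable [TopologicalSpace A] {X : Set (G → A)}

lemma subset_closure_setOf_isPeriodicConfig (hG : ResiduallyFinite G) (hft : IsOfFiniteType X)
    (hsi : IsStronglyIrreducible X) (hper : ∃ p ∈ X, IsPeriodicConfig p) :
    X ⊆ closure {y | y ∈ X ∧ IsPeriodicConfig y} := by
  intro x hx
  rw [mem_closure_iff]
  intro U hU hxU
  obtain ⟨I, t, hIt, hIU⟩ := isOpen_pi_iff.1 hU x hxU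
  obtain ⟨p, hpX, hp⟩ := hper
  obtain ⟨y, hyX, hy, hyx⟩ := exists_isPeriodicConfig_eqOn hG hft hsi hpX hp hx I
  exact ⟨y, hIU fun i hi => (hyx i hi).symm ▸ (hIt i hi).2, hyX, hy⟩

lemma exists_seq_isPeriodicConfig_dense [Countable G] [SecondCountableTopology A]
    (hG : ResiduallyFinite G) (hft : IsOfFiniteType X) (hsi : IsStronglyIrreducible X)
    (hper : ∃ p ∈ X, IsPeriodicConfig p) :
    ∃ u : ℕ → G → A, (∀ n, u n ∈ X ∧ IsPeriodicConfig (u n)) ∧ X ⊆ closure (Set.range u) := by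
  set S := {y | y ∈ X ∧ IsPeriodicConfig y}
  have : Nonempty S := hper.elim fun p hp => ⟨⟨p, hp⟩⟩
  obtain ⟨v, hv⟩ := TopologicalSpace.exists_dense_seq S
  have hS := Subtype.dense_iff.1 hv
  rw [← Set.range_comp] at hS
  exact ⟨Subtype.val ∘ v, fun n => (v n).2,
    (subset_closure_setOf_isPeriodicConfig hG hft hsi hper).trans
      (closure_minimal hS isClosed_closure)⟩

end Topology

section OrbitMeasure

variable [MeasurableSpace (G → A)] [MeasurableSingletonClass (G → A)] {y : G → A}

noncomputable def orbitMeasure (y : G → A) : Measure (G → A) :=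
  uniformOn (Set.range fun g : G => shift g y)

lemma isProbabilityMeasure_orbitMeasure (hy : IsPeriodicConfig y) :
    IsProbabilityMeasure (orbitMeasure y) :=
  isProbabilityMeasure_uniformOn hy ⟨y, 1, one_smul G y⟩

lemma orbitMeasure_pos (hy : IsPeriodicConfig y) {s : Set (G → A)} (hys : y ∈ s) :
    0 < orbitMeasure y s :=
  pos_iff_ne_zero.2 fun h =>
    Set.eq_empty_iff_forall_notMem.1 ((uniformOn_eq_zero_iff hy).1 h) y ⟨⟨1, one_smul G y⟩, hys⟩

lemma orbitMeasure_eq_one_of_isSubshift [TopologicalSpace A] {X : Set (G → A)}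
    (hX : IsSubshift X) (hyX : y ∈ X) (hy : IsPeriodicConfig y) : orbitMeasure y X = 1 :=
  uniformOn_eq_one_of hy ⟨y, 1, one_smul G y⟩ (Set.range_subset_iff.2 fun g => hX.2 g y hyX)

lemma map_shift_orbitMeasure [TopologicalSpace A] [BorelSpace (G → A)]
    (hy : IsPeriodicConfig y) (g : G) : (orbitMeasure y).map (shift g) = orbitMeasure y :=
  map_uniformOn_of_preimage_eq (continuous_shift g).measurable (MulAction.bijective g)
    hy.measurableSet ((Set.preimage_smul g _).trans (smul_orbit g⁻¹ y))

end OrbitMeasure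

end Shift

open MeasureTheory in
theorem exists_invariant_measure_full_support_general
    {G A : Type*} [Group G] [Countable G] [Finite A]
    [TopologicalSpace A] [DiscreteTopology A]
    [MeasurableSpace (G → A)] [BorelSpace (G → A)]
    (hG : ResiduallyFinite G) (X : Set (G → A))
    (hX : IsSubshift X) (hft : IsOfFiniteType X)
    (hsi : IsStronglyIrreducible X) (hper : ∃ x ∈ X, IsPeriodicConfig x) :
    ∃ μ : Measure (G → A), IsProbabilityMeasure μ ∧ μ X = 1 ∧
      (∀ g : G, μ.map (shift g) = μ) ∧
      (∀ U : Set (G → A), IsOpen U → (U ∩ X).Nonempty → 0 < μ (U ∩ X)) := by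
  obtain ⟨u, hu, hXu⟩ := exists_seq_isPeriodicConfig_dense hG hft hsi hper
  have := fun n => isProbabilityMeasure_orbitMeasure (hu n).2
  refine ⟨geometricMixture fun n => orbitMeasure (u n),
    ⟨geometricMixture_apply_eq_one .univ fun n => measure_univ⟩,
    geometricMixture_apply_eq_one hX.1.measurableSet fun n =>
      orbitMeasure_eq_one_of_isSubshift hX (hu n).1 (hu n).2,
    fun g => ?_, fun U hU hUX => ?_⟩
  · rw [map_geometricMixture (continuous_shift g).measurable]
    simp only [map_shift_orbitMeasure (hu _).2]
  · obtain ⟨w, hwU, hwX⟩ := hUX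
    obtain ⟨_, hnU, n, rfl⟩ := mem_closure_iff.1 (hXu hwX) U hU hwU
    exact geometricMixture_pos n (orbitMeasure_pos (hu n).2 ⟨hnU, (hu n).1⟩)

open MeasureTheory in
/-- If `G` is a countable residually finite group, `A` a finite set and `X ⊆ A^G` a
nonempty strongly irreducible subshift of finite type containing a periodic
configuration, then there is a shift-invariant Borel probability measure concentrated
on `X` whose support is all of `X` (every nonempty relatively open subset of `X` has
positive measure). -/
theorem exists_invariant_measure_full_support
    {G A : Type*} [Group G] [Countable G] [Finite A]
    [TopologicalSpace A] [DiscreteTopology A]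
    [MeasurableSpace (G → A)] [BorelSpace (G → A)]
    (hG : ResiduallyFinite G) (X : Set (G → A))
    (hne : X.Nonempty) (hX : IsSubshift X) (hft : IsOfFiniteType X)
    (hsi : IsStronglyIrreducible X) (hper : ∃ x ∈ X, IsPeriodicConfig x) :
    ∃ μ : Measure (G → A), IsProbabilityMeasure μ ∧ μ X = 1 ∧
      (∀ g : G, μ.map (shift g) = μ) ∧
      (∀ U : Set (G → A), IsOpen U → (U ∩ X).Nonempty → 0 < μ (U ∩ X)) :=
  exists_invariant_measure_full_support_general hG X hX hft hsi hper
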